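/- Every cellular automaton is Lipschitz (in fact uniformly continuous) with respect to the Besicovitch pseudo-distance: if F has radius r, then d_B(F(x), F(y)) ≤ (2r+1)·d_B(x,y). -/

import Mathlib

open Filter

/-- The Besicovitch pseudo-distance on `A^ℤ`. -/
noncomputable def besicovitchDist {A : Type*} [DecidableEq A] (x y : ℤ → A) : ℝ :=
  limsup (fun n : ℕ =>
    (((Finset.Icc (-(n : ℤ)) (n : ℤ)).filter (fun i => x i ≠ y i)).card : ℝ)
      / (2 * (n : ℝ) + 1)) atTop

/-- The cellular automaton of radius `r` with local rule `g`. -/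
def cellularAutomaton {A : Type*} (r : ℕ) (g : (Fin (2 * r + 1) → A) → A)
    (x : ℤ → A) : ℤ → A :=
  fun i => g (fun j => x (i + (j : ℤ) - (r : ℤ)))

/-!
A cell of `F x` is determined by the `2r+1` cells of `x` around it, so every mismatch of
`F x, F y` in `[-n, n]` is one of `2r+1` translates of a mismatch of `x, y` in `[-(n+r), n+r]`.
Dividing by `2n+1` bounds the density of mismatches of the images by
`(2r+1) · (2(n+r)+1)/(2n+1)` times the density of mismatches of `x, y` at scale `n+r`;
the factor tends to `2r+1`, and shifting the index by `r` does not change the `limsup`.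
-/

open Finset Topology

lemma Filter.limsup_le_mul_limsup_of_le_mul {ι : Type*} {f : Filter ι} [f.NeBot]
    {u c v : ι → ℝ} {a : ℝ} (hc : Tendsto c f (𝓝 a)) (hc0 : ∀ᶠ i in f, 0 ≤ c i)
    (hv0 : 0 ≤ᶠ[f] v) (hv : IsBoundedUnder (· ≤ ·) f v) (hu : IsCoboundedUnder (· ≤ ·) f u)
    (huv : ∀ᶠ i in f, u i ≤ c i * v i) :
    limsup u f ≤ a * limsup v f :=
  calc limsup u f ≤ limsup (c * v) f :=
        limsup_le_limsup huv hu
          (isBoundedUnder_le_mul_of_nonneg hc0.frequently hc.isBoundedUnder_le hv0 hv)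
    _ ≤ limsup c f * limsup v f := limsup_mul_le hc0.frequently hc.isBoundedUnder_le hv0 hv
    _ = a * limsup v f := by rw [hc.limsup_eq]

section Mismatch

variable {A : Type*} [DecidableEq A]

noncomputable def mismatchCount (x y : ℤ → A) (n : ℕ) : ℕ :=
  #{i ∈ Icc (-(n : ℤ)) n | x i ≠ y i}

noncomputable def mismatchDensity (x y : ℤ → A) (n : ℕ) : ℝ :=
  mismatchCount x y n / (2 * n + 1)

lemma besicovitchDist_eq_limsup_mismatchDensity (x y : ℤ → A) :
    besicovitchDist x y = limsup (mismatchDensity x y) atTop :=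
  rfl

lemma mismatchCount_le (x y : ℤ → A) (n : ℕ) : mismatchCount x y n ≤ 2 * n + 1 := by
  have := card_filter_le (Icc (-(n : ℤ)) n) (fun i => x i ≠ y i)
  rw [Int.card_Icc] at this
  unfold mismatchCount
  omega

lemma mismatchDensity_nonneg (x y : ℤ → A) (n : ℕ) : 0 ≤ mismatchDensity x y n := by
  unfold mismatchDensity
  positivity

lemma mismatchDensity_le_one (x y : ℤ → A) (n : ℕ) : mismatchDensity x y n ≤ 1 := by
  rw [mismatchDensity, div_le_one (by positivity)]
  exact_mod_cast mismatchCount_le x y n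

end Mismatch

section CellularAutomaton

variable {A : Type*} {r : ℕ} {g : (Fin (2 * r + 1) → A) → A}

lemma exists_ne_of_cellularAutomaton_ne {x y : ℤ → A} {i : ℤ}
    (h : cellularAutomaton r g x i ≠ cellularAutomaton r g y i) :
    ∃ j : Fin (2 * r + 1), x (i + j - r) ≠ y (i + j - r) := by
  by_contra! hxy
  exact h (congrArg g (funext hxy))

variable [DecidableEq A]

lemma mismatchCount_cellularAutomaton_le (x y : ℤ → A) (n : ℕ) :
    mismatchCount (cellularAutomaton r g x) (cellularAutomaton r g y) n
      ≤ (2 * r + 1) * mismatchCount x y (n + r) := by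
  have hsub : {i ∈ Icc (-(n : ℤ)) n | cellularAutomaton r g x i ≠ cellularAutomaton r g y i}
      ⊆ univ.biUnion fun j : Fin (2 * r + 1) =>
          {k ∈ Icc (-((n + r : ℕ) : ℤ)) (n + r : ℕ) | x k ≠ y k}.image (fun k => k - j + r) := by
    intro i hi
    rw [mem_filter, mem_Icc] at hi
    obtain ⟨j, hj⟩ := exists_ne_of_cellularAutomaton_ne hi.2
    have := j.isLt
    simp only [mem_biUnion, mem_univ, true_and, mem_image, mem_filter, mem_Icc]
    exact ⟨j, i + j - r, ⟨⟨by push_cast; omega, by push_cast; omega⟩, hj⟩, by ring⟩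
  calc _ ≤ _ := card_le_card hsub
    _ ≤ _ := card_biUnion_le_card_mul _ _ _ fun j _ => card_image_le
    _ = _ := by rw [card_univ, Fintype.card_fin]; rfl

lemma mismatchDensity_cellularAutomaton_le (x y : ℤ → A) (n : ℕ) :
    mismatchDensity (cellularAutomaton r g x) (cellularAutomaton r g y) n
      ≤ (2 * r + 1) * ((2 * r + 1 + 2 * n) / (1 + 2 * n)) * mismatchDensity x y (n + r) :=
  calc _ ≤ (2 * r + 1) * (mismatchCount x y (n + r) : ℝ) / (2 * n + 1) := by
        unfold mismatchDensity
        gcongr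
        exact_mod_cast mismatchCount_cellularAutomaton_le x y n
    _ = _ := by
        unfold mismatchDensity
        push_cast
        field_simp
        ring

end CellularAutomaton

theorem CA_lipschitz_besicovitch {A : Type*} [DecidableEq A] (r : ℕ)
    (g : (Fin (2 * r + 1) → A) → A) (x y : ℤ → A) :
    besicovitchDist (cellularAutomaton r g x) (cellularAutomaton r g y)
      ≤ (2 * (r : ℝ) + 1) * besicovitchDist x y := by
  have hfactor : Tendsto (fun n : ℕ => (2 * r + 1 : ℝ) * ((2 * r + 1 + 2 * n) / (1 + 2 * n)))
      atTop (𝓝 (2 * (r : ℝ) + 1)) := by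
    simpa using (tendsto_add_mul_div_add_mul_atTop_nhds (2 * r + 1 : ℝ) 1 2
      two_ne_zero).const_mul (2 * (r : ℝ) + 1)
  rw [besicovitchDist_eq_limsup_mismatchDensity, besicovitchDist_eq_limsup_mismatchDensity,
    ← limsup_nat_add (mismatchDensity x y) r]
  exact limsup_le_mul_limsup_of_le_mul hfactor (.of_forall fun n => by positivity)
    (.of_forall fun n => mismatchDensity_nonneg x y _)
    (isBoundedUnder_of ⟨1, fun n => mismatchDensity_le_one x y _⟩)
    (isCoboundedUnder_le_of_le atTop (mismatchDensity_nonneg _ _))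
    (.of_forall fun n => mismatchDensity_cellularAutomaton_le x y n)
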